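/- arXiv:1802.09954 — 2 statements merged into one kernel-verified Lean document; each statement's English description precedes it below -/
import Mathlib

section
/- If for every index k in K there exist at least two distinct indices i in I with k in K_i, and D_i are symmetric positive semidefinite K×K matrices each strictly positive definite on the coordinate subspace H_i = {x : x_j = 0 for j ∉ K_i} and vanishing on its orthogonal complement, then for any fixed j in I, the sum D_{-j} = Σ_{i ≠ j} D_i is (strictly) positive definite on all of ℝ^K. -/
open Matrix BigOperators Filter Topology

/-- Orthogonal projection onto the coordinate subspace determined by `S`. -/
noncomputable def proj (K : Type*) [Fintype K] [DecidableEq K] (S : Finset K) :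
    Matrix K K ℝ :=
  Matrix.diagonal (fun k => if k ∈ S then (1 : ℝ) else 0)

/-- `B ∈ S_≻^{H}` : symmetric nonnegative definite, vanishing on vectors orthogonal
to the coordinate subspace `H` given by `S`, and strictly positive definite on `H`. -/
def SPDOn {K : Type*} [Fintype K] [DecidableEq K] (S : Finset K) (B : Matrix K K ℝ) : Prop :=
  B.PosSemidef ∧
  (∀ x : K → ℝ, (∀ j, j ∉ S → x j = 0) → x ≠ 0 → 0 < x ⬝ᵥ (B *ᵥ x)) ∧
  (∀ x : K → ℝ, (∀ j, j ∈ S → x j = 0) → B *ᵥ x = 0)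

/-- The inverse of `B` computed on the coordinate subspace given by `S`, extended by zero
(`B^{-H}` in the paper). -/
noncomputable def invOn {K : Type*} [Fintype K] [DecidableEq K] (S : Finset K)
    (B : Matrix K K ℝ) : Matrix K K ℝ :=
  proj K S * (B + proj K Sᶜ)⁻¹ * proj K S

/-- `A ≺_{H} B` : the difference `B - A` belongs to `S_≻^{H}`. -/
def ltOn {K : Type*} [Fintype K] [DecidableEq K] (S : Finset K) (A B : Matrix K K ℝ) : Prop :=
  SPDOn S (B - A)

/-- The best-response map `F_i(X) = (B_i^{-H_i} + π_i (X_{-i})⁻¹ π_i)^{-H_i}`. -/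
noncomputable def Fmap {I K : Type*} [Fintype I] [DecidableEq I] [Fintype K] [DecidableEq K]
    (Ki : I → Finset K) (B : I → Matrix K K ℝ) (X : I → Matrix K K ℝ) (i : I) :
    Matrix K K ℝ :=
  invOn (Ki i) (invOn (Ki i) (B i) +
    proj K (Ki i) * (∑ j ∈ Finset.univ.erase i, X j)⁻¹ * proj K (Ki i))

/-! A nonzero `x` has a coordinate `k` with `x k ≠ 0`; some trader `i ≠ j` has access to `k`
(there are at least two), and `D i`, restricted to `H_i`, sees the nonzero projection of `x`,
so `xᵀ D_i x > 0`. The remaining summands are positive semidefinite. -/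

namespace Matrix

theorem posDef_sum_of_exists_pos {n R ι : Type*} [Fintype n] [CommRing R] [PartialOrder R]
    [StarRing R] [IsOrderedAddMonoid R] {A : ι → Matrix n n R} (s : Finset ι)
    (hA : ∀ i ∈ s, (A i).PosSemidef)
    (hpos : ∀ x : n → R, x ≠ 0 → ∃ i ∈ s, 0 < star x ⬝ᵥ (A i *ᵥ x)) :
    (∑ i ∈ s, A i).PosDef := by
  refine posDef_iff_dotProduct_mulVec.mpr ⟨(posSemidef_sum s hA).isHermitian, fun x hx => ?_⟩
  rw [sum_mulVec, dotProduct_sum]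
  obtain ⟨i, hi, hxi⟩ := hpos x hx
  exact Finset.sum_pos' (fun i hi => (hA i hi).dotProduct_mulVec_nonneg x) ⟨i, hi, hxi⟩

end Matrix

theorem SPDOn.dotProduct_mulVec_pos {K : Type*} [Fintype K] [DecidableEq K] {S : Finset K}
    {B : Matrix K K ℝ} (hB : SPDOn S B) {x : K → ℝ} {k : K} (hk : k ∈ S) (hxk : x k ≠ 0) :
    0 < x ⬝ᵥ (B *ᵥ x) := by
  obtain ⟨hpsd, hpos, hker⟩ := hB
  set y : K → ℝ := fun m => if m ∈ S then x m else 0 with hy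
  have hBxy : B *ᵥ x = B *ᵥ y := by
    rw [← sub_eq_zero, ← mulVec_sub]
    exact hker _ fun m hm => by simp [hy, hm]
  have hquad : x ⬝ᵥ (B *ᵥ x) = y ⬝ᵥ (B *ᵥ y) := by
    have hsymm : Bᵀ = B := hpsd.isHermitian
    calc x ⬝ᵥ (B *ᵥ x) = x ⬝ᵥ (B *ᵥ y) := by rw [hBxy]
      _ = (B *ᵥ x) ⬝ᵥ y := by rw [dotProduct_mulVec, ← vecMul_transpose, hsymm]
      _ = y ⬝ᵥ (B *ᵥ y) := by rw [hBxy, dotProduct_comm]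
  rw [hquad]
  refine hpos y (fun m hm => by simp [hy, hm]) fun hy0 => hxk ?_
  simpa [hy, hk] using congrFun hy0 k

/-- If every security is accessible to at least two distinct traders and each `D i` is
strictly positive definite on `H_i` (zero off it), then for any fixed `j`,
`∑_{i ≠ j} D i` is positive definite on all of `ℝ^K`. -/
theorem stmt_0 {I K : Type*} [Fintype I] [DecidableEq I] [Fintype K] [DecidableEq K]
    (Ki : I → Finset K)
    (hacc : ∀ k : K, ∃ i j : I, i ≠ j ∧ k ∈ Ki i ∧ k ∈ Ki j)
    (D : I → Matrix K K ℝ) (hD : ∀ i, SPDOn (Ki i) (D i)) (j : I) :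
    (∑ i ∈ Finset.univ.erase j, D i).PosDef := by
  refine posDef_sum_of_exists_pos _ (fun i _ => (hD i).1) fun x hx => ?_
  obtain ⟨k, hxk⟩ := Function.ne_iff.mp hx
  obtain ⟨i, hij, hki⟩ : ∃ i, i ≠ j ∧ k ∈ Ki i := by
    obtain ⟨a, b, hab, ha, hb⟩ := hacc k
    by_cases haj : a = j
    · exact ⟨b, haj ▸ hab.symm, hb⟩
    · exact ⟨a, haj, ha⟩
  refine ⟨i, Finset.mem_erase.mpr ⟨hij, Finset.mem_univ i⟩, ?_⟩
  simpa using (hD i).dotProduct_mulVec_pos hki hxk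
end

section
/- In the four-trader two-security full-participation example with C₀ = [[1, ρ],[ρ, 1]] and C₁ = Id, the symmetric equilibrium is X^f_1 = V h₁(D^ρ) V and X^f_0 = V h₀(D^ρ) V, where V = (1/√2)[[1,1],[1,−1]], D^ρ = diag(1/(1+ρ), 1/(1−ρ)), h₁(x) = 1/4 − (5/12)x + √((1/4 − (5/12)x)² + (2/3)x), and h₀(x) = 3x h₁(x)/(x + 3h₁(x)); i.e., these satisfy X^f_0 = (C₀ + (3X^f_1)⁻¹)⁻¹ and X^f_1 = (C₁ + (X^f_0 + 2X^f_1)⁻¹)⁻¹. -/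
/-!
Conjugation `d ↦ V * diagonal d * V` by the involution `V` is a ring homomorphism on diagonal
matrices, and `C₀ = V * diagonal (1 + ρ, 1 - ρ) * V`, so both fixed-point equations reduce
entrywise to the scalar equations `h₀ = (x⁻¹ + (3 h₁)⁻¹)⁻¹` and `h₁ = (1 + (h₀ + 2 h₁)⁻¹)⁻¹` at
`x = 1 / (1 ± ρ)`. The first is the definition of `h₀`; after eliminating `h₀`, the second says
that `h₁ x` is the positive root of `6 h² + (5 x - 3) h - 4 x = 0`.
-/

open Matrix BigOperators Filter Topology

noncomputable section

section ConjDiagonal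

variable {n R : Type*} [Fintype n] [DecidableEq n]

def conjDiagonal [CommSemiring R] (V : Matrix n n R) (hV : V * V = 1) :
    (n → R) →+* Matrix n n R where
  toFun d := V * diagonal d * V
  map_one' := by simp only [diagonal_one', Matrix.mul_one, hV]
  map_mul' d e := by
    change V * diagonal (fun i => d i * e i) * V = V * diagonal d * V * (V * diagonal e * V)
    rw [← diagonal_mul_diagonal, show diagonal d * diagonal e = diagonal d * (V * V) * diagonal e by
      rw [hV, Matrix.mul_one]]
    simp only [Matrix.mul_assoc]
  map_zero' := by simp only [diagonal_zero', Matrix.mul_zero, Matrix.zero_mul]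
  map_add' d e := by
    change _ = V * diagonal d * V + V * diagonal e * V
    rw [← Matrix.add_mul, ← Matrix.mul_add, diagonal_add]
    rfl

theorem conjDiagonal_apply [CommSemiring R] (V : Matrix n n R) (hV : V * V = 1) (d : n → R) :
    conjDiagonal V hV d = V * diagonal d * V :=
  rfl

theorem conjDiagonal_inv [Field R] (V : Matrix n n R) (hV : V * V = 1) {d : n → R}
    (hd : ∀ i, d i ≠ 0) : (conjDiagonal V hV d)⁻¹ = conjDiagonal V hV d⁻¹ := by
  refine inv_eq_right_inv ?_
  rw [← map_mul, ← map_one (conjDiagonal V hV)]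
  exact congrArg _ (funext fun i => mul_inv_cancel₀ (hd i))

end ConjDiagonal

def hadamard2 : Matrix (Fin 2) (Fin 2) ℝ := (Real.sqrt 2)⁻¹ • !![1, 1; 1, -1]

theorem hadamard2_mul_diagonal_mul_hadamard2 (a b : ℝ) :
    hadamard2 * diagonal ![a, b] * hadamard2 =
      !![(a + b) / 2, (a - b) / 2; (a - b) / 2, (a + b) / 2] := by
  have h2 : Real.sqrt 2 ^ 2 = 2 := Real.sq_sqrt zero_le_two
  ext i j
  fin_cases i <;> fin_cases j <;>
    simp [hadamard2, Matrix.mul_apply, Fin.sum_univ_two, diagonal_apply, vecMul, dotProduct] <;>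
    field_simp <;> rw [h2] <;> ring

theorem hadamard2_mul_self : hadamard2 * hadamard2 = 1 := by
  have h := hadamard2_mul_diagonal_mul_hadamard2 1 1
  rw [show (![1, 1] : Fin 2 → ℝ) = 1 from funext fun i => by fin_cases i <;> rfl, diagonal_one',
    Matrix.mul_one] at h
  rw [h, Matrix.one_fin_two]
  norm_num

def h₁ (x : ℝ) : ℝ :=
  1 / 4 - (5 / 12) * x + Real.sqrt ((1 / 4 - (5 / 12) * x) ^ 2 + (2 / 3) * x)

def h₀ (x : ℝ) : ℝ := 3 * x * h₁ x / (x + 3 * h₁ x)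

theorem h₁_pos {x : ℝ} (hx : 0 < x) : 0 < h₁ x := by
  have hr : 0 ≤ (1 / 4 - (5 / 12) * x) ^ 2 + (2 / 3) * x := by positivity
  have hs := Real.sq_sqrt hr
  have hs0 := Real.sqrt_nonneg ((1 / 4 - (5 / 12) * x) ^ 2 + (2 / 3) * x)
  unfold h₁
  nlinarith

theorem h₁_quadratic {x : ℝ} (hx : 0 ≤ x) : 6 * h₁ x ^ 2 + (5 * x - 3) * h₁ x - 4 * x = 0 := by
  have hs := Real.sq_sqrt (by positivity : 0 ≤ (1 / 4 - (5 / 12) * x) ^ 2 + (2 / 3) * x)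
  unfold h₁
  nlinarith

theorem h₀_pos {x : ℝ} (hx : 0 < x) : 0 < h₀ x := by
  have := h₁_pos hx
  unfold h₀
  positivity

theorem h₀_eq_inv {x : ℝ} (hx : 0 < x) : h₀ x = (x⁻¹ + (3 * h₁ x)⁻¹)⁻¹ := by
  have := h₁_pos hx
  unfold h₀
  field_simp
  ring

theorem h₁_eq_inv {x : ℝ} (hx : 0 < x) : h₁ x = (1 + (h₀ x + 2 * h₁ x)⁻¹)⁻¹ := by
  have hh := h₁_pos hx
  have hq := h₁_quadratic hx.le
  have hsum : h₀ x + 2 * h₁ x = h₁ x * (5 * x + 6 * h₁ x) / (x + 3 * h₁ x) := by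
    unfold h₀; field_simp; ring
  rw [hsum]
  field_simp
  linear_combination hq

end

/-- Full-participation example: with `C₀ = [[1, ρ], [ρ, 1]]`, `C₁ = Id`,
`V = (1/√2)[[1,1],[1,−1]]`, the matrices `X^f_1 = V h₁(D^ρ) V` and `X^f_0 = V h₀(D^ρ) V`
satisfy `X^f_0 = (C₀ + (3X^f_1)⁻¹)⁻¹` and `X^f_1 = (C₁ + (X^f_0 + 2X^f_1)⁻¹)⁻¹`. -/
theorem stmt_18 (ρ : ℝ) (hρ : ρ ∈ Set.Ioo (-1 : ℝ) 1) :
    let h1 : ℝ → ℝ := fun x =>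
      1 / 4 - (5 / 12) * x + Real.sqrt ((1 / 4 - (5 / 12) * x) ^ 2 + (2 / 3) * x)
    let h0 : ℝ → ℝ := fun x => 3 * x * h1 x / (x + 3 * h1 x)
    let V : Matrix (Fin 2) (Fin 2) ℝ := (Real.sqrt 2)⁻¹ • !![1, 1; 1, -1]
    let C0 : Matrix (Fin 2) (Fin 2) ℝ := !![1, ρ; ρ, 1]
    let X1 : Matrix (Fin 2) (Fin 2) ℝ :=
      V * Matrix.diagonal ![h1 (1 / (1 + ρ)), h1 (1 / (1 - ρ))] * V
    let X0 : Matrix (Fin 2) (Fin 2) ℝ :=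
      V * Matrix.diagonal ![h0 (1 / (1 + ρ)), h0 (1 / (1 - ρ))] * V
    X0 = (C0 + (3 • X1)⁻¹)⁻¹ ∧
    X1 = ((1 : Matrix (Fin 2) (Fin 2) ℝ) + (X0 + 2 • X1)⁻¹)⁻¹ := by
  intro h1 h0 V C0 X1 X0
  set φ := conjDiagonal hadamard2 hadamard2_mul_self
  set D : Fin 2 → ℝ := ![1 / (1 + ρ), 1 / (1 - ρ)]
  have hD : ∀ i, 0 < D i := by
    simp only [Fin.forall_fin_two, D, Matrix.cons_val_zero, Matrix.cons_val_one, one_div]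
    constructor <;> (apply inv_pos.2; linarith [hρ.1, hρ.2])
  have hX1 : X1 = φ (fun i => h₁ (D i)) := rfl
  have hX0 : X0 = φ (fun i => h₀ (D i)) := rfl
  have hC0 : C0 = φ D⁻¹ := by
    rw [conjDiagonal_apply, show D⁻¹ = ![1 + ρ, 1 - ρ] from funext fun i => by
      fin_cases i <;> simp [D], hadamard2_mul_diagonal_mul_hadamard2]
    ext i j; fin_cases i <;> fin_cases j <;> simp [C0]
  constructor
  · rw [hX0, hX1, hC0, ← map_nsmul, conjDiagonal_inv, ← map_add, conjDiagonal_inv]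
    · exact congrArg φ (funext fun i => by simpa using h₀_eq_inv (hD i))
    all_goals intro i; have := hD i; have := h₁_pos (hD i); simp; positivity
  · rw [hX0, hX1, ← map_one φ, ← map_nsmul, ← map_add, conjDiagonal_inv, ← map_add,
      conjDiagonal_inv]
    · exact congrArg φ (funext fun i => by simpa using h₁_eq_inv (hD i))
    all_goals intro i; have := h₁_pos (hD i); have := h₀_pos (hD i); simp; positivity
end
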